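/- arXiv:1103.1232 — 6 statements merged into one kernel-verified Lean document; each statement's English description precedes it below -/
import Mathlib

section
/- There is a group isomorphism from the Baumslag–Solitar group BS(1,2) to the semidirect product ℤ[1/2] ⋊ ℤ which sends the generator a to (1,0) and the generator t to (0,1). -/
/-- A rational number is *dyadic* (an element of ℤ[1/2]) if it has the form `u·2^x`
with `u, x ∈ ℤ`. -/
def IsDyadic (q : ℚ) : Prop := ∃ u x : ℤ, q = (u : ℚ) * 2 ^ x

theorem isDyadic_int (z : ℤ) : IsDyadic (z : ℚ) := ⟨z, 0, by norm_num⟩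

theorem isDyadic_zero : IsDyadic (0 : ℚ) := ⟨0, 0, by norm_num⟩

theorem isDyadic_one : IsDyadic (1 : ℚ) := ⟨1, 0, by norm_num⟩

theorem IsDyadic.add {a b : ℚ} (ha : IsDyadic a) (hb : IsDyadic b) : IsDyadic (a + b) := by
  obtain ⟨u, x, rfl⟩ := ha
  obtain ⟨v, y, rfl⟩ := hb
  rcases le_total x y with h | h
  · refine ⟨u + v * 2 ^ (y - x).toNat, x, ?_⟩
    have h2 : (((y - x).toNat : ℤ)) = y - x := Int.toNat_of_nonneg (by omega)
    have h3 : (2 : ℚ) ^ ((y - x).toNat) = (2 : ℚ) ^ (y - x : ℤ) := by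
      rw [← zpow_natCast (2 : ℚ) (y - x).toNat, h2]
    have h4 : y - x + x = y := by omega
    push_cast
    rw [h3, add_mul, mul_assoc, ← zpow_add₀ (by norm_num : (2:ℚ) ≠ 0), h4]
  · refine ⟨u * 2 ^ (x - y).toNat + v, y, ?_⟩
    have h2 : (((x - y).toNat : ℤ)) = x - y := Int.toNat_of_nonneg (by omega)
    have h3 : (2 : ℚ) ^ ((x - y).toNat) = (2 : ℚ) ^ (x - y : ℤ) := by
      rw [← zpow_natCast (2 : ℚ) (x - y).toNat, h2]
    have h4 : x - y + y = x := by omega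
    push_cast
    rw [h3, add_mul, mul_assoc, ← zpow_add₀ (by norm_num : (2:ℚ) ≠ 0), h4]

theorem IsDyadic.neg {a : ℚ} (ha : IsDyadic a) : IsDyadic (-a) := by
  obtain ⟨u, x, rfl⟩ := ha
  exact ⟨-u, x, by push_cast; ring⟩

theorem IsDyadic.zpow_mul (x : ℤ) {a : ℚ} (ha : IsDyadic a) : IsDyadic (2 ^ x * a) := by
  obtain ⟨u, y, rfl⟩ := ha
  exact ⟨u, x + y, by rw [zpow_add₀ (by norm_num : (2:ℚ) ≠ 0)]; ring⟩

theorem IsDyadic.mul_zpow {a : ℚ} (ha : IsDyadic a) (x : ℤ) : IsDyadic (a * 2 ^ x) := by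
  obtain ⟨u, y, rfl⟩ := ha
  exact ⟨u, y + x, by rw [zpow_add₀ (by norm_num : (2:ℚ) ≠ 0)]; ring⟩

/-- The additive group ℤ[1/2] of dyadic rationals. -/
def ZHalf : Type := {q : ℚ // IsDyadic q}

/-- The semidirect product ℤ[1/2] ⋊ ℤ: pairs `(r, m)` with `r ∈ ℤ[1/2]`, `m ∈ ℤ`,
and multiplication `(r, m)·(s, n) = (r + 2^m·s, m + n)`. -/
def SDP : Type := ZHalf × ℤ

instance : Group SDP where
  mul p q := (⟨p.1.1 + 2 ^ p.2 * q.1.1, p.1.2.add (IsDyadic.zpow_mul _ q.1.2)⟩, p.2 + q.2)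
  one := (⟨0, isDyadic_zero⟩, 0)
  inv p := (⟨-(2 ^ (-p.2) * p.1.1), (IsDyadic.zpow_mul _ p.1.2).neg⟩, -p.2)
  mul_assoc p q r := by
    refine Prod.ext (Subtype.ext ?_) ?_
    · show (p.1.1 + 2 ^ p.2 * q.1.1) + 2 ^ (p.2 + q.2) * r.1.1
        = p.1.1 + 2 ^ p.2 * (q.1.1 + 2 ^ q.2 * r.1.1)
      rw [zpow_add₀ (by norm_num : (2:ℚ) ≠ 0)]; ring
    · show p.2 + q.2 + r.2 = p.2 + (q.2 + r.2); ring
  one_mul p := by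
    refine Prod.ext (Subtype.ext ?_) ?_
    · show (0 : ℚ) + 2 ^ (0 : ℤ) * p.1.1 = p.1.1
      norm_num
    · show 0 + p.2 = p.2; ring
  mul_one p := by
    refine Prod.ext (Subtype.ext ?_) ?_
    · show p.1.1 + 2 ^ p.2 * 0 = p.1.1
      ring
    · show p.2 + 0 = p.2; ring
  inv_mul_cancel p := by
    refine Prod.ext (Subtype.ext ?_) ?_
    · show -(2 ^ (-p.2) * p.1.1) + 2 ^ (-p.2) * p.1.1 = (0 : ℚ)
      ring
    · show -p.2 + p.2 = 0; ring

@[simp] theorem SDP.mul_fst (p q : SDP) : (p * q).1.1 = p.1.1 + 2 ^ p.2 * q.1.1 := rfl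
@[simp] theorem SDP.mul_snd (p q : SDP) : (p * q).2 = p.2 + q.2 := rfl
@[simp] theorem SDP.one_fst : (1 : SDP).1.1 = 0 := rfl
@[simp] theorem SDP.one_snd : (1 : SDP).2 = 0 := rfl
@[simp] theorem SDP.inv_fst (p : SDP) : (p⁻¹).1.1 = -(2 ^ (-p.2) * p.1.1) := rfl
@[simp] theorem SDP.inv_snd (p : SDP) : (p⁻¹).2 = -p.2 := rfl

/-- The single relator `t a t⁻¹ a⁻²` of the Baumslag–Solitar group BS(1,2),
with `a` the generator of index `0` and `t` the generator of index `1`. -/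
def bsRels : Set (FreeGroup (Fin 2)) :=
  {FreeGroup.of 1 * FreeGroup.of 0 * (FreeGroup.of 1)⁻¹ * (FreeGroup.of 0 * FreeGroup.of 0)⁻¹}

/-- The Baumslag–Solitar group BS(1,2) = ⟨a, t ∣ t a t⁻¹ = a²⟩. -/
abbrev BS12 : Type := PresentedGroup bsRels

/-- The generator `a` of BS(1,2). -/
def bsA : BS12 := PresentedGroup.of 0

/-- The generator `t` of BS(1,2). -/
def bsT : BS12 := PresentedGroup.of 1

/-! Conjugation by `t` doubles the exponent of `a`, so `t^x a^u t^(-x)` depends only on the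
dyadic rational `u·2^x`, and these elements multiply as the dyadic rationals add. Hence
`(u·2^x, m) ↦ t^x a^u t^(-x) t^m` is a well-defined map `ψ` from ℤ[1/2] ⋊ ℤ back to BS(1,2). It is
a right inverse of the homomorphism `φ` defined on the generators, by direct computation, and a
left inverse because `ψ (q · φ s) = ψ q · s` for both generators `s`, an identity that then holds
for every `s` in the group they generate. -/

theorem MonoidHom.leftInverse_of_apply_mul_map {G H : Type*} [Group G] [Group H] (φ : G →* H)
    (ψ : H → G) {S : Set G} (hS : Subgroup.closure S = ⊤) (h_one : ψ 1 = 1)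
    (h_mul : ∀ h : H, ∀ s ∈ S, ψ (h * φ s) = ψ h * s) : Function.LeftInverse ψ φ := by
  have key : ∀ g : G, ∀ h : H, ψ (h * φ g) = ψ h * g := by
    intro g
    have hg : g ∈ Subgroup.closure S := hS ▸ Subgroup.mem_top g
    induction hg using Subgroup.closure_induction with
    | mem s hs => exact fun h ↦ h_mul h s hs
    | one => simp
    | mul x y _ _ hx hy => intro h; rw [map_mul, ← mul_assoc, hy, hx, mul_assoc]
    | inv x _ hx =>
      intro h
      refine eq_mul_inv_of_mul_eq ?_
      rw [← hx, map_inv, inv_mul_cancel_right]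
  intro g
  simpa [h_one] using key g 1

def sdpA : SDP := (⟨1, isDyadic_one⟩, 0)

def sdpT : SDP := (⟨0, isDyadic_zero⟩, 1)

@[simp] theorem sdpA_fst : sdpA.1.1 = 1 := rfl

@[simp] theorem sdpA_snd : sdpA.2 = 0 := rfl

@[simp] theorem sdpT_fst : sdpT.1.1 = 0 := rfl

@[simp] theorem sdpT_snd : sdpT.2 = 1 := rfl

theorem SDP.ext' {p q : SDP} (h₁ : p.1.1 = q.1.1) (h₂ : p.2 = q.2) : p = q :=
  Prod.ext (Subtype.ext h₁) h₂

theorem sdpA_zpow (u : ℤ) : (sdpA ^ u).1.1 = u ∧ (sdpA ^ u).2 = 0 := by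
  induction u using Int.induction_on with
  | zero => simp
  | succ n ih => rw [zpow_add_one, SDP.mul_fst, SDP.mul_snd, ih.1, ih.2]; simp
  | pred n ih => rw [zpow_sub_one, SDP.mul_fst, SDP.mul_snd, ih.1, ih.2]; simp [sub_eq_add_neg]

theorem sdpT_zpow (m : ℤ) : (sdpT ^ m).1.1 = 0 ∧ (sdpT ^ m).2 = m := by
  induction m using Int.induction_on with
  | zero => simp
  | succ n ih => rw [zpow_add_one, SDP.mul_fst, SDP.mul_snd, ih.1, ih.2]; simp
  | pred n ih => rw [zpow_sub_one, SDP.mul_fst, SDP.mul_snd, ih.1, ih.2]; simp [sub_eq_add_neg]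

theorem sdp_rels : ∀ r ∈ bsRels, FreeGroup.lift ![sdpA, sdpT] r = 1 := by
  rintro _ rfl
  simp only [map_mul, map_inv, FreeGroup.lift_apply_of]
  refine mul_inv_eq_one.mpr (SDP.ext' ?_ ?_) <;> norm_num

theorem bsT_mul_bsA_mul_inv : bsT * bsA * bsT⁻¹ = bsA ^ 2 := by
  have h := PresentedGroup.mk_eq_mk_of_mul_inv_mem (rels := bsRels)
    (x := FreeGroup.of 1 * FreeGroup.of 0 * (FreeGroup.of 1)⁻¹)
    (y := FreeGroup.of 0 * FreeGroup.of 0) rfl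
  simp only [map_mul, map_inv] at h
  exact h.trans (pow_two _).symm

theorem bsT_pow_mul_bsA_zpow_mul_inv (n : ℕ) (u : ℤ) :
    bsT ^ n * bsA ^ u * (bsT ^ n)⁻¹ = bsA ^ (2 ^ n * u) := by
  induction n generalizing u with
  | zero => simp
  | succ n ih =>
    have hconj : bsT * bsA ^ u * bsT⁻¹ = bsA ^ (2 * u) := by
      rw [← conj_zpow, bsT_mul_bsA_mul_inv, ← zpow_natCast, ← zpow_mul]; rfl
    calc bsT ^ (n + 1) * bsA ^ u * (bsT ^ (n + 1))⁻¹
        = bsT ^ n * (bsT * bsA ^ u * bsT⁻¹) * (bsT ^ n)⁻¹ := by group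
      _ = bsA ^ (2 ^ (n + 1) * u) := by rw [hconj, ih, pow_succ, mul_assoc]

def bsDyadic (u x : ℤ) : BS12 := bsT ^ x * bsA ^ u * bsT ^ (-x)

theorem bsDyadic_add (u v x : ℤ) : bsDyadic (u + v) x = bsDyadic u x * bsDyadic v x := by
  simp only [bsDyadic, zpow_add]; group

theorem bsDyadic_mul_two_pow (u x : ℤ) (n : ℕ) :
    bsDyadic (u * 2 ^ n) x = bsDyadic u (x + n) := by
  rw [bsDyadic, mul_comm, ← bsT_pow_mul_bsA_zpow_mul_inv, bsDyadic]
  simp only [zpow_add, zpow_neg, zpow_natCast]; group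

theorem exists_bsDyadic_eq_of_le (u : ℤ) {x z : ℤ} (h : z ≤ x) :
    ∃ w : ℤ, (u : ℚ) * 2 ^ x = w * 2 ^ z ∧ bsDyadic u x = bsDyadic w z := by
  obtain ⟨n, rfl⟩ : ∃ n : ℕ, x = z + n := ⟨(x - z).toNat, by omega⟩
  refine ⟨u * 2 ^ n, ?_, (bsDyadic_mul_two_pow u z n).symm⟩
  rw [zpow_add₀ two_ne_zero, zpow_natCast]
  push_cast
  ring

theorem bsDyadic_congr {u x v y : ℤ} (h : (u : ℚ) * 2 ^ x = v * 2 ^ y) :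
    bsDyadic u x = bsDyadic v y := by
  obtain ⟨u', hu, eu⟩ := exists_bsDyadic_eq_of_le u (min_le_left x y)
  obtain ⟨v', hv, ev⟩ := exists_bsDyadic_eq_of_le v (min_le_right x y)
  have : (u' : ℚ) = v' := mul_right_cancel₀ (by positivity) (hu.symm.trans (h.trans hv))
  rw [eu, ev, Int.cast_inj.mp this]

theorem exists_bsDyadic_mul_eq (u x v y : ℤ) :
    ∃ w z : ℤ, (u : ℚ) * 2 ^ x + v * 2 ^ y = w * 2 ^ z ∧
      bsDyadic u x * bsDyadic v y = bsDyadic w z := by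
  obtain ⟨u', hu, eu⟩ := exists_bsDyadic_eq_of_le u (min_le_left x y)
  obtain ⟨v', hv, ev⟩ := exists_bsDyadic_eq_of_le v (min_le_right x y)
  exact ⟨u' + v', min x y, by rw [hu, hv]; push_cast; ring, by rw [eu, ev, bsDyadic_add]⟩

noncomputable def ZHalf.toBS12 (r : ZHalf) : BS12 :=
  bsDyadic r.2.choose r.2.choose_spec.choose

theorem ZHalf.toBS12_eq {r : ZHalf} {u x : ℤ} (h : r.1 = u * 2 ^ x) : r.toBS12 = bsDyadic u x :=
  bsDyadic_congr (r.2.choose_spec.choose_spec.symm.trans h)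

noncomputable def sdpToBS12 (p : SDP) : BS12 := p.1.toBS12 * bsT ^ p.2

theorem sdpToBS12_one : sdpToBS12 1 = 1 := by
  rw [sdpToBS12, ZHalf.toBS12_eq (u := 0) (x := 0) (by simp)]
  simp [bsDyadic]

theorem sdpToBS12_mul_sdpA (p : SDP) : sdpToBS12 (p * sdpA) = sdpToBS12 p * bsA := by
  obtain ⟨u, x, hp⟩ := p.1.2
  obtain ⟨w, z, hsum, hprod⟩ := exists_bsDyadic_mul_eq u x 1 p.2
  have hpA : (p * sdpA).1.1 = w * 2 ^ z := by simp [hp, ← hsum, mul_comm]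
  rw [sdpToBS12, sdpToBS12, ZHalf.toBS12_eq hpA, ZHalf.toBS12_eq hp, ← hprod, SDP.mul_snd,
    sdpA_snd, add_zero, bsDyadic, bsDyadic]
  group

theorem sdpToBS12_mul_sdpT (p : SDP) : sdpToBS12 (p * sdpT) = sdpToBS12 p * bsT := by
  obtain ⟨u, x, hp⟩ := p.1.2
  have hpT : (p * sdpT).1.1 = u * 2 ^ x := by simp [hp]
  rw [sdpToBS12, sdpToBS12, ZHalf.toBS12_eq hpT, ZHalf.toBS12_eq hp, SDP.mul_snd, sdpT_snd,
    zpow_add_one, mul_assoc]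

def bsToSDP : BS12 →* SDP := PresentedGroup.toGroup sdp_rels

theorem bsToSDP_bsA : bsToSDP bsA = sdpA := PresentedGroup.toGroup.of sdp_rels

theorem bsToSDP_bsT : bsToSDP bsT = sdpT := PresentedGroup.toGroup.of sdp_rels

theorem bsToSDP_bsDyadic (u x : ℤ) :
    (bsToSDP (bsDyadic u x)).1.1 = u * 2 ^ x ∧ (bsToSDP (bsDyadic u x)).2 = 0 := by
  simp only [bsDyadic, map_mul, map_zpow, bsToSDP_bsA, bsToSDP_bsT, SDP.mul_fst, SDP.mul_snd,
    (sdpA_zpow u).1, (sdpA_zpow u).2, (sdpT_zpow _).1, (sdpT_zpow _).2]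
  constructor <;> ring

theorem bsToSDP_sdpToBS12 (p : SDP) : bsToSDP (sdpToBS12 p) = p := by
  obtain ⟨u, x, hp⟩ := p.1.2
  rw [sdpToBS12, ZHalf.toBS12_eq hp, map_mul, map_zpow, bsToSDP_bsT]
  refine SDP.ext' ?_ ?_
  · simp [(bsToSDP_bsDyadic u x).1, (sdpT_zpow _).1, hp]
  · simp [(bsToSDP_bsDyadic u x).2, (sdpT_zpow _).2]

/-- There is a group isomorphism from BS(1,2) to the semidirect
product ℤ[1/2] ⋊ ℤ sending the generator `a` to `(1,0)` and `t` to `(0,1)`. -/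
theorem bs12_iso_sdp :
    ∃ φ : BS12 ≃* SDP,
      φ bsA = ((⟨1, isDyadic_one⟩ : ZHalf), (0 : ℤ)) ∧
      φ bsT = ((⟨0, isDyadic_zero⟩ : ZHalf), (1 : ℤ)) := by
  have left_inv : Function.LeftInverse sdpToBS12 bsToSDP := by
    refine bsToSDP.leftInverse_of_apply_mul_map sdpToBS12 (PresentedGroup.closure_range_of bsRels)
      sdpToBS12_one ?_
    rintro q _ ⟨i, rfl⟩
    fin_cases i
    · exact bsToSDP_bsA ▸ sdpToBS12_mul_sdpA q
    · exact bsToSDP_bsT ▸ sdpToBS12_mul_sdpT q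
  exact ⟨{ bsToSDP with invFun := sdpToBS12, left_inv, right_inv := bsToSDP_sdpToBS12 },
    bsToSDP_bsA, bsToSDP_bsT⟩
end

section
/- Let q ≥ 1 and let H_q be the Higman group. Define elements w(p,i) ∈ H_q for p ∈ ℤ/qℤ and i ∈ ℕ by w(p,0) = a_p and w(p−1, i+1) = w(p,i) · a_{p−1} · w(p,i)⁻¹. Then for all p ∈ ℤ/qℤ and n ∈ ℕ, w(p,n) = a_p^{tow(n)} in H_q. -/
/-- The relators `a_p a_{p−1} a_p⁻¹ a_{p−1}⁻²` (for `p ∈ ℤ/qℤ`) of the Higman group. -/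
def higmanRels (q : ℕ) : Set (FreeGroup (ZMod q)) :=
  Set.range fun p : ZMod q =>
    FreeGroup.of p * FreeGroup.of (p - 1) * (FreeGroup.of p)⁻¹ *
      (FreeGroup.of (p - 1) * FreeGroup.of (p - 1))⁻¹

/-- The Higman group `H_q`, generated by `a_p` for `p ∈ ℤ/qℤ` subject to the relations
`a_p a_{p−1} a_p⁻¹ = a_{p−1}²`. -/
abbrev Higman (q : ℕ) : Type := PresentedGroup (higmanRels q)

/-- The generator `a_p` of the Higman group `H_q`. -/
def hgen (q : ℕ) (p : ZMod q) : Higman q := PresentedGroup.of p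

/-- The tower function: tow(0) = 1, tow(i+1) = 2^tow(i). -/
def tow : ℕ → ℕ
  | 0 => 1
  | n + 1 => 2 ^ tow n

/-- The elements `w(p, i)` of the Higman group, defined by `w(p, 0) = a_p` and
`w(p−1, i+1) = w(p, i) · a_{p−1} · w(p, i)⁻¹` (equivalently,
`w(p, i+1) = w(p+1, i) · a_p · w(p+1, i)⁻¹`). -/
def wH (q : ℕ) : ℕ → ZMod q → Higman q
  | 0, p => hgen q p
  | i + 1, p => wH q i (p + 1) * hgen q p * (wH q i (p + 1))⁻¹

/-!
Conjugation by `a_{p+1}` squares `a_p`, so conjugation by `a_{p+1}^k` raises `a_p` to the power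
`2^k`. Since `w(p+1, n) = a_{p+1}^{tow n}` by induction, `w(p, n+1)` is the conjugate of `a_p` by
`a_{p+1}^{tow n}`, namely `a_p^{2^{tow n}} = a_p^{tow (n+1)}`.
-/

theorem pow_mul_mul_inv_pow_eq_pow_two_pow {G : Type*} [Group G] {a b : G}
    (h : b * a * b⁻¹ = a ^ 2) (k : ℕ) : b ^ k * a * (b ^ k)⁻¹ = a ^ 2 ^ k := by
  induction k with
  | zero => simp
  | succ k ih =>
    calc b ^ (k + 1) * a * (b ^ (k + 1))⁻¹ = b * (b ^ k * a * (b ^ k)⁻¹) * b⁻¹ := by group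
      _ = (b * a * b⁻¹) ^ 2 ^ k := by rw [ih, conj_pow]
      _ = a ^ 2 ^ (k + 1) := by rw [h, ← pow_mul, pow_succ']

theorem hgen_succ_mul_hgen_mul_inv (q : ℕ) (p : ZMod q) :
    hgen q (p + 1) * hgen q p * (hgen q (p + 1))⁻¹ = hgen q p ^ 2 := by
  have hrel : PresentedGroup.mk (higmanRels q)
      (FreeGroup.of (p + 1) * FreeGroup.of p * (FreeGroup.of (p + 1))⁻¹) =
      PresentedGroup.mk (higmanRels q) (FreeGroup.of p * FreeGroup.of p) :=
    PresentedGroup.mk_eq_mk_of_mul_inv_mem ⟨p + 1, by simp only [add_sub_cancel_right]⟩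
  simpa only [hgen, PresentedGroup.of, map_mul, map_inv, sq] using hrel

theorem wH_eq_pow_tow_general (q : ℕ) (p : ZMod q) (n : ℕ) :
    wH q n p = hgen q p ^ tow n := by
  induction n generalizing p with
  | zero => simp [wH, tow]
  | succ n ih =>
    rw [wH, ih, tow, pow_mul_mul_inv_pow_eq_pow_two_pow (hgen_succ_mul_hgen_mul_inv q p)]

/-- For `q ≥ 1`, all `p ∈ ℤ/qℤ` and `n ∈ ℕ`, one has
`w(p, n) = a_p^{tow(n)}` in the Higman group `H_q`. -/
theorem wH_eq_pow_tow (q : ℕ) (hq : 1 ≤ q) (p : ZMod q) (n : ℕ) :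
    wH q n p = hgen q p ^ tow n :=
  wH_eq_pow_tow_general q p n
end

section
/- Let Γ be a finite set and δ : Γ × Γ → {−1, 0, +1} such that the directed graph on Γ with arc set {(P,Q) : δ(P,Q) ≠ 0} is acyclic, and let ε be the associated evaluation. Then the following are equivalent: (1) ε(P) is a power of 2 with natural-number exponent (ε(P) ∈ {2^n : n ∈ ℕ}) for every node P ∈ Γ; (2) Σ_{Q∈Γ} δ(P,Q)·ε(Q) ≥ 0 for every node P ∈ Γ; (3) ε(M) ∈ ℤ for every marking M : Γ → {−1, 0, +1}. -/
/-- Let `Γ` be a finite set and `δ : Γ × Γ → {−1, 0, +1}` whose support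
digraph is acyclic, and let `ε` be the associated evaluation, i.e. a function satisfying
`ε(P) = 2^{Σ_Q δ(P,Q)·ε(Q)}` for every node `P`. Then the following are equivalent:
(1) every node evaluates to a power of 2 with natural exponent;
(2) `Σ_Q δ(P,Q)·ε(Q) ≥ 0` for every node `P`;
(3) every marking `M : Γ → {−1, 0, +1}` evaluates to an integer. -/
theorem power_circuit_integer_evaluation_tfae
    (Γ : Type) [Fintype Γ] (δ : Γ → Γ → ℤ)
    (hδ : ∀ P Q, δ P Q = -1 ∨ δ P Q = 0 ∨ δ P Q = 1)
    (hacyclic : ∀ P, ¬ Relation.TransGen (fun P Q : Γ => δ P Q ≠ 0) P P)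
    (ε : Γ → ℝ)
    (hε : ∀ P, ε P = (2 : ℝ) ^ (∑ Q, (δ P Q : ℝ) * ε Q)) :
    ((∀ P, ∃ n : ℕ, ε P = 2 ^ n) ↔ (∀ P, 0 ≤ ∑ Q, (δ P Q : ℝ) * ε Q)) ∧
    ((∀ P, 0 ≤ ∑ Q, (δ P Q : ℝ) * ε Q) ↔
      (∀ M : Γ → ℤ, (∀ P, M P = -1 ∨ M P = 0 ∨ M P = 1) →
        ∃ z : ℤ, ∑ P, (M P : ℝ) * ε P = (z : ℝ))) := by
  classical
  -- the relation "Q is a direct input of P" is well-founded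
  have hwf : WellFounded (fun Q P : Γ => δ P Q ≠ 0) := by
    have hirr : IsIrrefl Γ (Relation.TransGen (fun Q P : Γ => δ P Q ≠ 0)) := by
      constructor
      intro P hP
      exact hacyclic P ((Relation.transGen_swap
        (r := fun P Q : Γ => δ P Q ≠ 0)).mp hP)
    have htwf : WellFounded (Relation.TransGen (fun Q P : Γ => δ P Q ≠ 0)) :=
      Finite.wellFounded_of_trans_of_irrefl _
    exact Subrelation.wf (q := fun Q P : Γ => δ P Q ≠ 0)
      (r := Relation.TransGen fun Q P : Γ => δ P Q ≠ 0)
      (fun h => Relation.TransGen.single h) htwf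
  -- (2) → (1)
  have h21 : (∀ P, 0 ≤ ∑ Q, (δ P Q : ℝ) * ε Q) → ∀ P, ∃ n : ℕ, ε P = 2 ^ n := by
    intro h2 P
    refine hwf.induction (C := fun P => ∃ n : ℕ, ε P = 2 ^ n) P ?_
    intro P IH
    have hterm : ∀ Q : Γ, ∃ t : ℤ, (δ P Q : ℝ) * ε Q = ((δ P Q * t : ℤ) : ℝ) := by
      intro Q
      by_cases h : δ P Q = 0
      · exact ⟨0, by simp [h]⟩
      · obtain ⟨n, hn⟩ := IH Q h
        exact ⟨2 ^ n, by push_cast; rw [hn]⟩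
    choose t ht using hterm
    have hm : ((∑ Q, δ P Q * t Q : ℤ) : ℝ) = ∑ Q, (δ P Q : ℝ) * ε Q := by
      rw [Int.cast_sum]
      exact Finset.sum_congr rfl fun Q _ => (ht Q).symm
    set m : ℤ := ∑ Q, δ P Q * t Q with hmdef
    have hm0 : 0 ≤ m := by
      have := h2 P
      rw [← hm] at this
      exact_mod_cast this
    refine ⟨m.toNat, ?_⟩
    rw [hε P, ← hm]
    rw [show ((m : ℝ)) = ((m.toNat : ℕ) : ℝ) by
      exact_mod_cast (Int.toNat_of_nonneg hm0).symm]
    exact Real.rpow_natCast 2 m.toNat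
  constructor
  · constructor
    · -- (1) → (2)
      intro h1 P
      obtain ⟨n, hn⟩ := h1 P
      have h2eq : (2 : ℝ) ^ (∑ Q, (δ P Q : ℝ) * ε Q) = (2 : ℝ) ^ ((n : ℕ) : ℝ) := by
        rw [← hε P, hn, Real.rpow_natCast]
      have := congrArg (Real.logb 2) h2eq
      rw [Real.logb_rpow (by norm_num) (by norm_num),
        Real.logb_rpow (by norm_num) (by norm_num)] at this
      rw [this]
      positivity
    · exact h21
  · constructor
    · -- (2) → (3)
      intro h2 M hM
      choose n hn using h21 h2
      refine ⟨∑ P, M P * 2 ^ (n P), ?_⟩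
      rw [Int.cast_sum]
      refine Finset.sum_congr rfl fun P _ => ?_
      rw [hn P]; push_cast; ring
    · -- (3) → (2)
      intro h3 P
      obtain ⟨z, hz⟩ := h3 (fun Q => if Q = P then 1 else 0)
        (fun Q => by by_cases h : Q = P <;> simp [h])
      have hzP : ε P = (z : ℝ) := by
        rw [← hz]
        rw [Finset.sum_eq_single P]
        · simp
        · intro Q _ hQ; simp [hQ]
        · intro h; exact absurd (Finset.mem_univ P) h
      have hpos : (0 : ℝ) < ε P := by
        rw [hε P]; exact Real.rpow_pos_of_pos (by norm_num) _
      have hz1 : (1 : ℝ) ≤ ε P := by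
        rw [hzP] at hpos ⊢
        exact_mod_cast (by exact_mod_cast hpos : (0 : ℤ) < z)
      by_contra h
      push_neg at h
      have : ε P < 1 := by
        rw [hε P]
        exact Real.rpow_lt_one_of_one_lt_of_neg (by norm_num) h
      linarith
end

section
/- Let n ∈ ℕ and let e : Fin n → ℕ be strictly increasing. Call a map M : Fin n → ℤ with values in {−1, 0, +1} compact if for any two distinct indices i, j with M(i) ≠ 0 and M(j) ≠ 0 one has |e(i) − e(j)| ≥ 2, and write ε(M) = Σ_i M(i)·2^{e(i)}. Then for compact M and K: (a) ε(M) = ε(K) if and only if M = K; and (b) if M ≠ K and i₀ is the largest index with M(i₀) ≠ K(i₀), then ε(M) > ε(K) if and only if M(i₀) > K(i₀). -/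
/-- A marking `M : Fin n → ℤ` (with values in `{−1, 0, +1}`) over a strictly increasing
sequence of exponents `e` is *compact* if any two distinct indices carrying nonzero marks
have exponents differing by at least 2. -/
def IsCompactMarking {n : ℕ} (e : Fin n → ℕ) (M : Fin n → ℤ) : Prop :=
  (∀ i, M i = -1 ∨ M i = 0 ∨ M i = 1) ∧
  ∀ i j : Fin n, i ≠ j → M i ≠ 0 → M j ≠ 0 → 2 ≤ |(e i : ℤ) - (e j : ℤ)|

/-!
A signed-digit sum whose nonzero digits sit at exponents that are pairwise at least 2 apart and
all at most `b - 2` is bounded in absolute value by `2^(b-2) + 2^(b-4) + ⋯ < 2^b / 3`. Hence,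
at the most significant index `i₀` where two compact markings differ, the lower digits of each
marking contribute less than `(2 - |digit at i₀|) · 2^(e i₀) / 3`, which is too little to
overturn the difference of the digits at `i₀`.
-/

open Finset

theorem add_two_le_of_two_le_abs_sub {a b : ℕ} (h : 2 ≤ |(a : ℤ) - b|) (hab : a ≤ b) :
    a + 2 ≤ b := by
  rcases le_abs'.mp h with h | h <;> omega

theorem three_mul_abs_sum_digits_lt_two_pow {ι : Type*} [DecidableEq ι] (e : ι → ℕ)
    (d : ι → ℤ) (s : Finset ι) (hd : ∀ j ∈ s, |d j| ≤ 1)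
    (hsep : ∀ i ∈ s, ∀ j ∈ s, i ≠ j → d i ≠ 0 → d j ≠ 0 → 2 ≤ |(e i : ℤ) - e j|)
    {b : ℕ} (hb : ∀ j ∈ s, d j ≠ 0 → e j + 2 ≤ b) :
    3 * |∑ j ∈ s, d j * 2 ^ e j| < 2 ^ b := by
  induction s using Finset.induction_on_max_value e generalizing b with
  | empty => simp
  | insert a s ha hmax ih =>
    have hd' : ∀ j ∈ s, |d j| ≤ 1 := fun j hj => hd j (mem_insert_of_mem hj)
    have hsep' := fun i hi j hj => hsep i (mem_insert_of_mem hi) j (mem_insert_of_mem hj)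
    rw [sum_insert ha]
    by_cases hda : d a = 0
    · simpa [hda] using ih hd' hsep' fun j hj => hb j (mem_insert_of_mem hj)
    have hlower : ∀ j ∈ s, d j ≠ 0 → e j + 2 ≤ e a := fun j hj hdj =>
      add_two_le_of_two_le_abs_sub (hsep j (mem_insert_of_mem hj) a (mem_insert_self a s)
        (ne_of_mem_of_not_mem hj ha) hdj hda) (hmax j hj)
    have htail := ih hd' hsep' hlower
    have hlead : |d a * 2 ^ e a| ≤ 2 ^ e a := by
      rw [abs_mul, abs_pow, abs_two]
      exact mul_le_of_le_one_left (by positivity) (hd a (mem_insert_self a s))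
    have hpow : (2 : ℤ) ^ (e a + 2) ≤ 2 ^ b :=
      pow_le_pow_right₀ (by norm_num) (hb a (mem_insert_self a s) hda)
    calc 3 * |d a * 2 ^ e a + ∑ j ∈ s, d j * 2 ^ e j|
        ≤ 3 * (2 ^ e a + |∑ j ∈ s, d j * 2 ^ e j|) := by
          gcongr; exact (abs_add_le _ _).trans (by gcongr)
      _ < 2 ^ (e a + 2) := by rw [pow_add]; linarith
      _ ≤ 2 ^ b := hpow

theorem sum_sub_sum_eq_add_sum_Iio_sub {ι β : Type*} [Fintype ι] [LinearOrder ι]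
    [LocallyFiniteOrderBot ι] [AddCommGroup β] {f g : ι → β} (i₀ : ι)
    (h : ∀ j, f j ≠ g j → j ≤ i₀) :
    ∑ j, f j - ∑ j, g j = f i₀ - g i₀ + (∑ j ∈ Iio i₀, f j - ∑ j ∈ Iio i₀, g j) := by
  have hsupp : ∀ j ∈ univ, j ∉ Iic i₀ → f j - g j = 0 := fun j _ hj =>
    sub_eq_zero.mpr (not_not.mp fun hne => hj (mem_Iic.mpr (h j hne)))
  rw [← sum_sub_distrib, ← sum_subset (subset_univ _) hsupp, ← Iio_insert,
    sum_insert notMem_Iio_self, sum_sub_distrib]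

theorem exists_max_ne_of_ne {α : Type*} [Fintype α] [LinearOrder α] {β : Type*} {f g : α → β}
    (h : f ≠ g) : ∃ i₀, f i₀ ≠ g i₀ ∧ ∀ j, f j ≠ g j → j ≤ i₀ := by
  classical
  obtain ⟨i₀, hi₀, hmax⟩ := exists_max_image {j | f j ≠ g j} id
    (filter_nonempty_iff.mpr (by simpa [funext_iff] using h))
  exact ⟨i₀, (mem_filter.mp hi₀).2, fun j hj => hmax j (mem_filter.mpr ⟨mem_univ j, hj⟩)⟩

section CompactMarking

variable {n : ℕ} {e : Fin n → ℕ} {M K : Fin n → ℤ}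

theorem IsCompactMarking.abs_le_one (hM : IsCompactMarking e M) (i : Fin n) : |M i| ≤ 1 := by
  rcases hM.1 i with h | h | h <;> simp [h]

theorem IsCompactMarking.three_mul_abs_sum_Iio_add_lt (he : StrictMono e)
    (hM : IsCompactMarking e M) (i : Fin n) :
    3 * |∑ j ∈ Iio i, M j * 2 ^ e j| + |M i| * 2 ^ e i < 2 ^ (e i + 1) := by
  have hbound (b : ℕ) := three_mul_abs_sum_digits_lt_two_pow e M (Iio i) (b := b)
    (fun j _ => hM.abs_le_one j) (fun j _ k _ hjk => hM.2 j k hjk)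
  have hlt : ∀ j ∈ Iio i, e j < e i := fun j hj => he (mem_Iio.mp hj)
  by_cases hi : M i = 0
  · simpa [hi] using hbound (e i + 1) fun j hj _ => by have := hlt j hj; omega
  have hsep : ∀ j ∈ Iio i, M j ≠ 0 → e j + 2 ≤ e i := fun j hj hj0 =>
    add_two_le_of_two_le_abs_sub (hM.2 j i (mem_Iio.mp hj).ne hj0 hi) (hlt j hj).le
  have hMi : |M i| = 1 := le_antisymm (hM.abs_le_one i) (Int.one_le_abs hi)
  rw [hMi, pow_succ]
  linarith [hbound (e i) hsep]

theorem IsCompactMarking.sum_lt_sum (he : StrictMono e) (hM : IsCompactMarking e M)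
    (hK : IsCompactMarking e K) {i₀ : Fin n} (hlt : K i₀ < M i₀)
    (hmax : ∀ j, M j ≠ K j → j ≤ i₀) :
    ∑ i, K i * 2 ^ e i < ∑ i, M i * 2 ^ e i := by
  have hMtail := hM.three_mul_abs_sum_Iio_add_lt he i₀
  have hKtail := hK.three_mul_abs_sum_Iio_add_lt he i₀
  have hdigits : 4 ≤ 3 * (M i₀ - K i₀) + |M i₀| + |K i₀| := by
    rcases hM.1 i₀ with hm | hm | hm <;> rcases hK.1 i₀ with hk | hk | hk <;>
      simp [hm, hk] at hlt ⊢
  have hlead := mul_le_mul_of_nonneg_right hdigits (pow_pos (two_pos (α := ℤ)) (e i₀)).le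
  rw [← sub_pos, sum_sub_sum_eq_add_sum_Iio_sub i₀ fun j hj => hmax j fun h => hj (by rw [h])]
  rw [pow_succ] at hMtail hKtail
  linarith [neg_abs_le (∑ j ∈ Iio i₀, M j * 2 ^ e j),
    le_abs_self (∑ j ∈ Iio i₀, K j * 2 ^ e j)]

end CompactMarking

/-- Compact markings over a fixed strictly increasing exponent sequence are
uniquely determined by their values `ε(M) = Σ_i M(i)·2^{e(i)}`, and two distinct compact
markings compare according to the most significant digit at which they differ. -/
theorem compact_marking_unique_and_compare
    (n : ℕ) (e : Fin n → ℕ) (he : StrictMono e)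
    (M K : Fin n → ℤ) (hM : IsCompactMarking e M) (hK : IsCompactMarking e K) :
    ((∑ i, M i * 2 ^ e i) = (∑ i, K i * 2 ^ e i) ↔ M = K) ∧
    (∀ i₀ : Fin n, M i₀ ≠ K i₀ → (∀ j, M j ≠ K j → j ≤ i₀) →
      ((∑ i, K i * 2 ^ e i) < (∑ i, M i * 2 ^ e i) ↔ K i₀ < M i₀)) := by
  have hgt {i₀} (hmax : ∀ j, M j ≠ K j → j ≤ i₀) (hlt : M i₀ < K i₀) :
      ∑ i, M i * 2 ^ e i < ∑ i, K i * 2 ^ e i :=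
    hK.sum_lt_sum he hM hlt fun j hj => hmax j (Ne.symm hj)
  refine ⟨⟨fun heq => ?_, fun h => h ▸ rfl⟩, fun i₀ hne hmax => ⟨fun hlt => ?_,
    fun hlt => hM.sum_lt_sum he hK hlt hmax⟩⟩
  · by_contra hne
    obtain ⟨i₀, hi₀, hmax⟩ := exists_max_ne_of_ne hne
    rcases hi₀.lt_or_gt with hlt | hlt
    · exact (hgt hmax hlt).ne heq
    · exact (hM.sum_lt_sum he hK hlt hmax).ne' heq
  · exact hne.lt_or_gt.resolve_left fun h => (hgt hmax h).asymm hlt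
end

section
/- Fix q ≥ 2 and indices 1 ≤ i ≤ j < q. Let F₁ be the free group on one generator z, let ψ₁ : F₁ → G_{i..j} send z to a_j, and let ψ₂ : F₁ → G_{j,j+1} send z to a_j. Then the pushout of ψ₁ and ψ₂ is isomorphic to G_{i..j+1}, via an isomorphism sending the image of each generator a_p to the generator a_p of G_{i..j+1}. -/
/-!
Both groups are generated by the `a_p`, and sending `a_p` to `a_p` defines homomorphisms in
both directions, which are then mutually inverse since they are so on generators. The only
relator of `G_{i..j+1}` that does not come from `G_{i..j}` is `a_{j+1} a_j a_{j+1}⁻¹ = a_j²`;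
it holds in the pushout because there the two copies of `a_j` are identified, so the relator
can be read inside the factor `G_{j,j+1}`.
-/

/-- The relators `a_p a_{p−1} a_p⁻¹ a_{p−1}⁻²` (for `i < p ≤ j`) of the group `G_{i..j}`. -/
def segRels (i j : ℕ) : Set (FreeGroup {p : ℕ // i ≤ p ∧ p ≤ j}) :=
  {r | ∃ (p : ℕ) (h1 : i < p) (h2 : p ≤ j),
    r = FreeGroup.of ⟨p, le_of_lt h1, h2⟩ * FreeGroup.of ⟨p - 1, by omega, by omega⟩ *
        (FreeGroup.of ⟨p, le_of_lt h1, h2⟩)⁻¹ *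
        (FreeGroup.of ⟨p - 1, by omega, by omega⟩ * FreeGroup.of ⟨p - 1, by omega, by omega⟩)⁻¹}

/-- The group `G_{i..j} = ⟨a_i, …, a_j ∣ a_p a_{p−1} a_p⁻¹ = a_{p−1}² for i < p ≤ j⟩`. -/
abbrev Gseg (i j : ℕ) : Type := PresentedGroup (segRels i j)

/-- The generator `a_p` of `G_{i..j}`. -/
def sgen (i j : ℕ) (p : ℕ) (h1 : i ≤ p) (h2 : p ≤ j) : Gseg i j :=
  PresentedGroup.of ⟨p, h1, h2⟩

/-- The pair of groups `(G_{i..j}, G_{j,j+1})`. -/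
def segFam (i j : ℕ) : Fin 2 → Type
  | ⟨0, _⟩ => Gseg i j
  | ⟨1, _⟩ => Gseg j (j + 1)

instance (i j : ℕ) : ∀ k : Fin 2, Group (segFam i j k)
  | ⟨0, _⟩ => inferInstanceAs (Group (Gseg i j))
  | ⟨1, _⟩ => inferInstanceAs (Group (Gseg j (j + 1)))

/-- The pair of homomorphisms `ψ₁ : F₁ → G_{i..j}` and `ψ₂ : F₁ → G_{j,j+1}` from the free
group `F₁` on one generator `z`, both sending `z` to `a_j`. -/
def segPhi (i j : ℕ) (h : i ≤ j) : ∀ k : Fin 2, FreeGroup Unit →* segFam i j k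
  | ⟨0, _⟩ => FreeGroup.lift fun _ => sgen i j j h le_rfl
  | ⟨1, _⟩ => FreeGroup.lift fun _ => sgen j (j + 1) j le_rfl (Nat.le_succ j)

namespace Gseg

variable {H : Type*} [Group H]

theorem sgen_conj (i j p : ℕ) (h1 : i ≤ p) (h2 : p < j) :
    sgen i j (p + 1) (by omega) h2 * sgen i j p h1 h2.le * (sgen i j (p + 1) (by omega) h2)⁻¹ =
      sgen i j p h1 h2.le * sgen i j p h1 h2.le := by
  have hrel := PresentedGroup.one_of_mem (rels := segRels i j) ⟨p + 1, by omega, h2, rfl⟩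
  simp only [map_mul, map_inv, mul_inv_eq_one, Nat.add_sub_cancel] at hrel
  exact hrel

section Lift

variable {i j : ℕ} (f : ∀ p, i ≤ p → p ≤ j → H)
  (hf : ∀ p (h1 : i ≤ p) (h2 : p < j),
    f (p + 1) (by omega) h2 * f p h1 h2.le * (f (p + 1) (by omega) h2)⁻¹ =
      f p h1 h2.le * f p h1 h2.le)

def lift : Gseg i j →* H :=
  PresentedGroup.toGroup (f := fun x => f x.1 x.2.1 x.2.2) <| by
    rintro r ⟨_ | p, h1, h2, rfl⟩
    · omega
    · simp only [map_mul, map_inv, FreeGroup.lift_apply_of, Nat.add_sub_cancel, mul_inv_eq_one]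
      exact hf p (by omega) h2

@[simp]
theorem lift_sgen (p : ℕ) (h1 : i ≤ p) (h2 : p ≤ j) : lift f hf (sgen i j p h1 h2) = f p h1 h2 :=
  PresentedGroup.toGroup.of _

end Lift

theorem hom_ext {i j : ℕ} {φ ψ : Gseg i j →* H}
    (h : ∀ p (h1 : i ≤ p) (h2 : p ≤ j), φ (sgen i j p h1 h2) = ψ (sgen i j p h1 h2)) : φ = ψ :=
  PresentedGroup.ext fun x => h x.1 x.2.1 x.2.2

def incl {i j i' j' : ℕ} (hi : i' ≤ i) (hj : j ≤ j') : Gseg i j →* Gseg i' j' :=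
  lift (fun p h1 h2 => sgen i' j' p (hi.trans h1) (h2.trans hj)) fun p h1 h2 =>
    sgen_conj i' j' p (hi.trans h1) (h2.trans_le hj)

@[simp]
theorem incl_sgen {i j i' j' : ℕ} (hi : i' ≤ i) (hj : j ≤ j') (p : ℕ) (h1 : i ≤ p) (h2 : p ≤ j) :
    incl hi hj (sgen i j p h1 h2) = sgen i' j' p (hi.trans h1) (h2.trans hj) :=
  lift_sgen _ _ p h1 h2

end Gseg

open Monoid

section Pushout

variable (i j : ℕ) (hij : i ≤ j)

abbrev pushoutLeft : Gseg i j →* PushoutI (segPhi i j hij) :=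
  PushoutI.of (φ := segPhi i j hij) 0

abbrev pushoutRight : Gseg j (j + 1) →* PushoutI (segPhi i j hij) :=
  PushoutI.of (φ := segPhi i j hij) 1

theorem pushoutLeft_sgen_eq_pushoutRight_sgen :
    pushoutLeft i j hij (sgen i j j hij le_rfl) =
      pushoutRight i j hij (sgen j (j + 1) j le_rfl j.le_succ) :=
  (PushoutI.of_apply_eq_base _ 0 (FreeGroup.of ())).trans
    (PushoutI.of_apply_eq_base _ 1 (FreeGroup.of ())).symm

def pushoutLegs : ∀ k, segFam i j k →* Gseg i (j + 1)
  | ⟨0, _⟩ => Gseg.incl le_rfl j.le_succ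
  | ⟨1, _⟩ => Gseg.incl hij le_rfl

theorem pushout_hom_ext {K : Type*} [Group K] {f g : PushoutI (segPhi i j hij) →* K}
    (hleft : ∀ p (h1 : i ≤ p) (h2 : p ≤ j),
      f (pushoutLeft i j hij (sgen i j p h1 h2)) = g (pushoutLeft i j hij (sgen i j p h1 h2)))
    (hright : ∀ p (h1 : j ≤ p) (h2 : p ≤ j + 1),
      f (pushoutRight i j hij (sgen j (j + 1) p h1 h2)) =
        g (pushoutRight i j hij (sgen j (j + 1) p h1 h2))) :
    f = g :=
  PushoutI.hom_ext_nonempty fun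
    | ⟨0, _⟩ => Gseg.hom_ext hleft
    | ⟨1, _⟩ => Gseg.hom_ext hright

theorem pushoutLegs_comp_segPhi :
    ∀ k, (pushoutLegs i j hij k).comp (segPhi i j hij k) =
      FreeGroup.lift fun _ => sgen i (j + 1) j hij j.le_succ
  -- `segFam i j k` only unfolds to a `Gseg` once `k` is a literal, hence the `change`s.
  | ⟨0, _⟩ => FreeGroup.ext_hom _ _ fun _ => by
    change Gseg.incl le_rfl j.le_succ
      (FreeGroup.lift (fun _ => sgen i j j hij le_rfl) (FreeGroup.of ())) = _
    simp
  | ⟨1, _⟩ => FreeGroup.ext_hom _ _ fun _ => by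
    change Gseg.incl hij le_rfl
      (FreeGroup.lift (fun _ => sgen j (j + 1) j le_rfl j.le_succ) (FreeGroup.of ())) = _
    simp

def pushoutToGseg : PushoutI (segPhi i j hij) →* Gseg i (j + 1) :=
  PushoutI.lift (pushoutLegs i j hij) _ (pushoutLegs_comp_segPhi i j hij)

@[simp]
theorem pushoutToGseg_left (p : ℕ) (h1 : i ≤ p) (h2 : p ≤ j) :
    pushoutToGseg i j hij (pushoutLeft i j hij (sgen i j p h1 h2)) =
      sgen i (j + 1) p h1 (h2.trans j.le_succ) :=
  (PushoutI.lift_of _ _ _ _).trans (Gseg.incl_sgen le_rfl j.le_succ p h1 h2)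

@[simp]
theorem pushoutToGseg_right (p : ℕ) (h1 : j ≤ p) (h2 : p ≤ j + 1) :
    pushoutToGseg i j hij (pushoutRight i j hij (sgen j (j + 1) p h1 h2)) =
      sgen i (j + 1) p (hij.trans h1) h2 :=
  (PushoutI.lift_of _ _ _ _).trans (Gseg.incl_sgen hij le_rfl p h1 h2)

def gsegToPushout : Gseg i (j + 1) →* PushoutI (segPhi i j hij) :=
  Gseg.lift
    (fun p h1 h2 => if hp : p ≤ j then pushoutLeft i j hij (sgen i j p h1 hp)
      else pushoutRight i j hij (sgen j (j + 1) p (not_le.mp hp).le h2))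
    fun p h1 h2 => by
      rcases (Nat.lt_succ_iff.mp h2).lt_or_eq with hp | hp
      · rw [dif_pos (show p + 1 ≤ j from hp), dif_pos hp.le]
        simpa only [map_mul, map_inv] using
          congrArg (pushoutLeft i j hij) (Gseg.sgen_conj i j p h1 hp)
      · obtain rfl := hp.symm
        rw [dif_neg (by omega), dif_pos le_rfl, pushoutLeft_sgen_eq_pushoutRight_sgen]
        simpa only [map_mul, map_inv] using
          congrArg (pushoutRight i j hij) (Gseg.sgen_conj j (j + 1) j le_rfl j.lt_succ_self)

theorem gsegToPushout_comp_pushoutToGseg :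
    (gsegToPushout i j hij).comp (pushoutToGseg i j hij) = MonoidHom.id _ := by
  refine pushout_hom_ext i j hij (fun p h1 h2 => ?_) fun p h1 h2 => ?_
  · simp [gsegToPushout, h2]
  · rcases h1.eq_or_lt with rfl | hp
    · simp [gsegToPushout, pushoutLeft_sgen_eq_pushoutRight_sgen]
    · simp [gsegToPushout, not_le.mpr hp]

theorem pushoutToGseg_comp_gsegToPushout :
    (pushoutToGseg i j hij).comp (gsegToPushout i j hij) = MonoidHom.id _ :=
  Gseg.hom_ext fun p h1 h2 => by
    by_cases hp : p ≤ j <;> simp [gsegToPushout, hp]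

end Pushout

theorem gseg_pushout_iso (i j : ℕ) (hij : i ≤ j) :
    ∃ ψ : Monoid.PushoutI (segPhi i j hij) ≃* Gseg i (j + 1),
      (∀ (p : ℕ) (h1 : i ≤ p) (h2 : p ≤ j),
        ψ (Monoid.PushoutI.of (φ := segPhi i j hij) 0 (sgen i j p h1 h2))
          = sgen i (j + 1) p h1 (by omega)) ∧
      (∀ (p : ℕ) (h1 : j ≤ p) (h2 : p ≤ j + 1),
        ψ (Monoid.PushoutI.of (φ := segPhi i j hij) 1 (sgen j (j + 1) p h1 h2))
          = sgen i (j + 1) p (by omega) h2) :=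
  ⟨(pushoutToGseg i j hij).toMulEquiv (gsegToPushout i j hij)
    (gsegToPushout_comp_pushoutToGseg i j hij) (pushoutToGseg_comp_gsegToPushout i j hij),
    pushoutToGseg_left i j hij, pushoutToGseg_right i j hij⟩
end

section
/- Let G₁, G₂, G₃ denote the cyclic subgroups of G_{123} generated by a₁, a₂, a₃ respectively. If g, g′ ∈ G₁ ∪ G₃ and h, h′ ∈ G₂ satisfy g·h = g′·h′ in G_{123}, then g = g′ and h = h′. -/
/-- The relators of the group G_{123} = ⟨a₁, a₂, a₃ ∣ a₂a₁a₂⁻¹ = a₁², a₃a₂a₃⁻¹ = a₂²⟩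
(generator of index `i` standing for `a_{i+1}`). The group G_{341} = ⟨a₃, a₄, a₁ ∣
a₄a₃a₄⁻¹ = a₃², a₁a₄a₁⁻¹ = a₄²⟩ has the same presentation, with the generator of
index `0` standing for `a₃`, index `1` for `a₄` and index `2` for `a₁`. -/
def chainRels : Set (FreeGroup (Fin 3)) :=
  {FreeGroup.of 1 * FreeGroup.of 0 * (FreeGroup.of 1)⁻¹ * (FreeGroup.of 0 * FreeGroup.of 0)⁻¹,
   FreeGroup.of 2 * FreeGroup.of 1 * (FreeGroup.of 2)⁻¹ * (FreeGroup.of 1 * FreeGroup.of 1)⁻¹}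

/-- The group G_{123} (and also, under a different reading of the generators, G_{341}). -/
abbrev Gchain : Type := PresentedGroup chainRels

/-- The generators of G_{123} (resp. G_{341}). -/
def cgen (i : Fin 3) : Gchain := PresentedGroup.of i

/-- The cyclic subgroup G₁ = ⟨a₁⟩ of G_{123}. -/
def G1 : Subgroup Gchain := Subgroup.zpowers (cgen 0)

/-- The cyclic subgroup G₂ = ⟨a₂⟩ of G_{123}. -/
def G2 : Subgroup Gchain := Subgroup.zpowers (cgen 1)

/-- The cyclic subgroup G₃ = ⟨a₃⟩ of G_{123}. -/
def G3 : Subgroup Gchain := Subgroup.zpowers (cgen 2)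

/-! Equivalently, `G₁ ∪ G₃` maps injectively to the coset space `G₁₂₃ ⧸ G₂`. This holds as soon
as `G₁` meets `G₂ ⊔ G₃` trivially and `G₂` meets `G₁ ⊔ G₃` trivially. Both facts are detected by
actions of `G₁₂₃` on `ℝ` in which one generator acts as the translation `x ↦ x + 1`, which has no
fixed point, while the other two fix `0`: `a₁ ↦ x + 1, a₂ ↦ 2x, a₃ ↦ x|x|` for the first, and
`a₁ ↦ id, a₂ ↦ x + 1, a₃ ↦ 2x` for the second. -/

namespace QuotientGroup

variable {G : Type*} [Group G]

theorem injOn_mk_of_disjoint {K H : Subgroup G} (hKH : Disjoint K H) :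
    Set.InjOn (QuotientGroup.mk : G → G ⧸ H) K :=
  fun _ hg _ hg' he ↦ inv_mul_eq_one.1 <|
    Subgroup.disjoint_def.1 hKH (mul_mem (inv_mem hg) hg') (QuotientGroup.eq.1 he)

theorem eq_one_of_mk_eq_mk_of_disjoint {K₁ K₃ H : Subgroup G} (h₁ : Disjoint K₁ (H ⊔ K₃))
    (h₃ : Disjoint H K₃) {g g' : G} (hg : g ∈ K₁) (hg' : g' ∈ K₃)
    (he : (g : G ⧸ H) = g') : g = 1 ∧ g' = 1 := by
  have hz : g⁻¹ * g' ∈ H := QuotientGroup.eq.1 he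
  have hg_eq : g = g' * (g⁻¹ * g')⁻¹ := by group
  have hg1 : g = 1 := Subgroup.disjoint_def.1 h₁ hg <| hg_eq ▸
    mul_mem (Subgroup.mem_sup_right hg') (Subgroup.mem_sup_left (inv_mem hz))
  subst hg1
  rw [inv_one, one_mul] at hz
  exact ⟨rfl, Subgroup.disjoint_def.1 h₃ hz hg'⟩

theorem injOn_mk_union {K₁ K₃ H : Subgroup G} (h₁ : Disjoint K₁ (H ⊔ K₃))
    (h₃ : Disjoint H K₃) :
    Set.InjOn (QuotientGroup.mk : G → G ⧸ H) ((K₁ : Set G) ∪ K₃) := by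
  rintro g (hg | hg) g' (hg' | hg') he
  · exact injOn_mk_of_disjoint (h₁.mono_right le_sup_left) hg hg' he
  · obtain ⟨rfl, rfl⟩ := eq_one_of_mk_eq_mk_of_disjoint h₁ h₃ hg hg' he
    rfl
  · obtain ⟨rfl, rfl⟩ := eq_one_of_mk_eq_mk_of_disjoint h₁ h₃ hg' hg he.symm
    rfl
  · exact injOn_mk_of_disjoint h₃.symm hg hg' he

theorem eq_and_eq_of_mul_eq_mul_of_injOn_mk {S : Set G} {H : Subgroup G}
    (hS : Set.InjOn (QuotientGroup.mk : G → G ⧸ H) S) {g g' h h' : G} (hg : g ∈ S)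
    (hg' : g' ∈ S) (hh : h ∈ H) (hh' : h' ∈ H) (he : g * h = g' * h') : g = g' ∧ h = h' := by
  have hgg' : g⁻¹ * g' = h * h'⁻¹ := by
    rw [inv_mul_eq_iff_eq_mul, ← mul_assoc, he, mul_inv_cancel_right]
  have hg_eq : g = g' := hS hg hg' (QuotientGroup.eq.2 (hgg' ▸ mul_mem hh (inv_mem hh')))
  subst hg_eq
  exact ⟨rfl, mul_left_cancel he⟩

end QuotientGroup

theorem Equiv.addRight_zpow_apply {α : Type*} [AddGroup α] (a x : α) (n : ℤ) :
    (Equiv.addRight a ^ n) x = x + n • a := by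
  induction n using Int.induction_on generalizing x with
  | zero => simp
  | succ n ih =>
    rw [zpow_add_one, Equiv.Perm.mul_apply, ih, Equiv.coe_addRight, add_assoc, add_zsmul,
      zsmul_add_comm, one_zsmul]
  | pred n ih =>
    rw [zpow_sub_one, Equiv.Perm.mul_apply, ih, Equiv.Perm.inv_def, Equiv.addRight_symm,
      Equiv.coe_addRight, add_assoc, sub_eq_add_neg, add_zsmul, zsmul_add_comm, neg_one_zsmul]

theorem disjoint_zpowers_comap_stabilizer_zero {G : Type*} [Group G]
    (ρ : G →* Equiv.Perm ℝ) {g : G} (hg : ρ g = Equiv.addRight 1) :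
    Disjoint (Subgroup.zpowers g) ((MulAction.stabilizer (Equiv.Perm ℝ) (0 : ℝ)).comap ρ) := by
  rw [Subgroup.disjoint_def]
  rintro _ ⟨n, rfl⟩ hfix
  rw [Subgroup.mem_comap, MulAction.mem_stabilizer_iff, Equiv.Perm.smul_def, map_zpow, hg,
    Equiv.addRight_zpow_apply, zero_add, zsmul_one, Int.cast_eq_zero] at hfix
  simp [hfix]

noncomputable def signedSq : Equiv.Perm ℝ where
  toFun x := x * |x|
  invFun y := y / Real.sqrt |y|
  left_inv x := by
    rcases eq_or_ne x 0 with rfl | hx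
    · simp
    · simp only [abs_mul, abs_abs, ← sq, Real.sqrt_sq_eq_abs]
      rw [mul_div_assoc, div_self (abs_ne_zero.2 hx), mul_one]
  right_inv y := by
    rcases eq_or_ne y 0 with rfl | hy
    · simp
    · have hs : 0 < Real.sqrt |y| := Real.sqrt_pos.2 (abs_pos.2 hy)
      simp only
      rw [abs_div, abs_of_pos hs, div_mul_div_comm, Real.mul_self_sqrt (abs_nonneg y),
        mul_div_assoc, div_self (abs_ne_zero.2 hy), mul_one]

theorem signedSq_apply (x : ℝ) : signedSq x = x * |x| := rfl

namespace Gchain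

def lift {H : Type*} [Group H] (x y z : H) (hxy : y * x = x * x * y)
    (hyz : z * y = y * y * z) : Gchain →* H :=
  PresentedGroup.toGroup (f := ![x, y, z]) <| by rintro r (rfl | rfl) <;> simp [hxy, hyz]

theorem lift_cgen {H : Type*} [Group H] (x y z : H) (hxy : y * x = x * x * y)
    (hyz : z * y = y * y * z) (i : Fin 3) : lift x y z hxy hyz (cgen i) = ![x, y, z] i :=
  PresentedGroup.toGroup.of _

noncomputable def shiftRep₁ : Gchain →* Equiv.Perm ℝ :=
  lift (Equiv.addRight 1) (Equiv.mulLeft₀ 2 two_ne_zero) signedSq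
    (by ext x; simp [Equiv.Perm.mul_apply]; ring)
    (by ext x; simp [Equiv.Perm.mul_apply, signedSq_apply, abs_mul]; ring)

noncomputable def shiftRep₂ : Gchain →* Equiv.Perm ℝ :=
  lift 1 (Equiv.addRight 1) (Equiv.mulLeft₀ 2 two_ne_zero)
    (by simp)
    (by ext x; simp [Equiv.Perm.mul_apply]; ring)

theorem disjoint_G1_G2_sup_G3 : Disjoint G1 (G2 ⊔ G3) := by
  refine (disjoint_zpowers_comap_stabilizer_zero shiftRep₁ (lift_cgen ..)).mono_right ?_
  refine sup_le ?_ ?_ <;>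
    simp [G2, G3, Subgroup.zpowers_le, MulAction.mem_stabilizer_iff, shiftRep₁, lift_cgen,
      signedSq_apply]

theorem disjoint_G2_G1_sup_G3 : Disjoint G2 (G1 ⊔ G3) := by
  refine (disjoint_zpowers_comap_stabilizer_zero shiftRep₂ (lift_cgen ..)).mono_right ?_
  refine sup_le ?_ ?_ <;>
    simp [G1, G3, Subgroup.zpowers_le, MulAction.mem_stabilizer_iff, shiftRep₂, lift_cgen]

end Gchain

/-- In G_{123}, if `g, g′ ∈ G₁ ∪ G₃` and `h, h′ ∈ G₂` satisfy
`g·h = g′·h′`, then `g = g′` and `h = h′`. -/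
theorem gchain_unique_factorization
    (g g' h h' : Gchain)
    (hg : g ∈ (G1 : Set Gchain) ∪ (G3 : Set Gchain))
    (hg' : g' ∈ (G1 : Set Gchain) ∪ (G3 : Set Gchain))
    (hh : h ∈ G2) (hh' : h' ∈ G2)
    (heq : g * h = g' * h') :
    g = g' ∧ h = h' :=
  QuotientGroup.eq_and_eq_of_mul_eq_mul_of_injOn_mk
    (QuotientGroup.injOn_mk_union Gchain.disjoint_G1_G2_sup_G3
      (Gchain.disjoint_G2_G1_sup_G3.mono_right le_sup_right))
    hg hg' hh hh' heq
end
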